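/- arXiv:2302.08179 — 2 statements merged into one kernel-verified Lean document; each statement's English description precedes it below -/
import Mathlib

section
/- Let V be a real normed vector space, and let Ω_i and Ω_j be disjoint subsets of V. Suppose x ∈ Ω_i, y ∈ Ω_j, and the closed segment [x, y] is contained in (closure Ω_i) ∪ (closure Ω_j). Then there exists a point z on the segment [x, y] with z ∈ Γ_{i,j} = (closure Ω_i) ∩ (closure Ω_j). -/
/-- If `x ∈ Ω_i`, `y ∈ Ω_j` with `Ω_i` and `Ω_j` disjoint, and the closed segment `[x, y]`
is contained in `closure Ω_i ∪ closure Ω_j`, then some point of the segment lies on the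
decision curve `Γ_{i,j} = closure Ω_i ∩ closure Ω_j`. -/
theorem segment_meets_decision_curve
    {V : Type*} [NormedAddCommGroup V] [NormedSpace ℝ V]
    (Ωi Ωj : Set V) (hdisj : Disjoint Ωi Ωj)
    (x y : V) (hx : x ∈ Ωi) (hy : y ∈ Ωj)
    (hseg : segment ℝ x y ⊆ closure Ωi ∪ closure Ωj) :
    ∃ z ∈ segment ℝ x y, z ∈ closure Ωi ∩ closure Ωj := by
  have hconn : IsPreconnected (segment ℝ x y) := (convex_segment x y).isPreconnected
  have h := isPreconnected_closed_iff.1 hconn (closure Ωi) (closure Ωj)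
    isClosed_closure isClosed_closure hseg
    ⟨x, left_mem_segment ℝ x y, subset_closure hx⟩
    ⟨y, right_mem_segment ℝ x y, subset_closure hy⟩
  obtain ⟨z, hz, hzi, hzj⟩ := h
  exact ⟨z, hz, hzi, hzj⟩
end

section
/- Let V be a real normed vector space, let Ω_i and Ω_j be disjoint subsets of V, and let ε > 0. Suppose x ∈ Ω_i, y ∈ Ω_j, the closed segment [x, y] is contained in (closure Ω_i) ∪ (closure Ω_j), and ‖x − y‖ ≤ 2ε. Then the midpoint (x + y)/2 has distance at most ε to Γ_{i,j} = (closure Ω_i) ∩ (closure Ω_j), i.e. the infimum distance from (x+y)/2 to the set Γ_{i,j} is at most ε. -/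
/-- Accuracy guarantee of the bisection building block: if `x ∈ Ω_i`, `y ∈ Ω_j` with
`Ω_i`, `Ω_j` disjoint, the segment `[x,y]` lies in `closure Ω_i ∪ closure Ω_j` and
`‖x − y‖ ≤ 2ε`, then the midpoint of `x` and `y` has distance at most `ε` to
`Γ_{i,j} = closure Ω_i ∩ closure Ω_j`. -/
theorem midpoint_dist_decision_curve_le
    {V : Type*} [NormedAddCommGroup V] [NormedSpace ℝ V]
    (Ωi Ωj : Set V) (hdisj : Disjoint Ωi Ωj)
    (x y : V) (hx : x ∈ Ωi) (hy : y ∈ Ωj)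
    (hseg : segment ℝ x y ⊆ closure Ωi ∪ closure Ωj)
    (ε : ℝ) (hε : 0 < ε) (hxy : ‖x - y‖ ≤ 2 * ε) :
    Metric.infDist (midpoint ℝ x y) (closure Ωi ∩ closure Ωj) ≤ ε := by
  have hconn : IsPreconnected (segment ℝ x y) := (convex_segment x y).isPreconnected
  have hmem := (isPreconnected_closed_iff.mp hconn) (closure Ωi) (closure Ωj)
    isClosed_closure isClosed_closure hseg
    ⟨x, left_mem_segment ℝ x y, subset_closure hx⟩
    ⟨y, right_mem_segment ℝ x y, subset_closure hy⟩
  obtain ⟨z, hzseg, hzΓ⟩ := hmem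
  obtain ⟨a, b, ha, hb, hab, hz⟩ := hzseg
  have hdz : dist (midpoint ℝ x y) z ≤ ε := by
    have hb' : b = 1 - a := by linarith
    have : midpoint ℝ x y - z = ((1:ℝ)/2 - a) • (x - y) := by
      rw [← hz, hb', midpoint_eq_smul_add, invOf_eq_inv]
      module
    rw [dist_eq_norm, this, norm_smul]
    have h1 : |(1:ℝ)/2 - a| ≤ 1/2 := by
      rw [abs_le]; constructor <;> linarith
    calc ‖(1:ℝ)/2 - a‖ * ‖x - y‖ ≤ (1/2) * (2 * ε) := by
          apply mul_le_mul h1 hxy (norm_nonneg _)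
          norm_num
      _ = ε := by ring
  exact le_trans (Metric.infDist_le_dist_of_mem hzΓ) hdz
end
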